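/- MMD for translation-invariant kernels via characteristic functions: if K(x,y) = ∫ cos(t(x−y)) dΛ(t) for a finite nonnegative Borel measure Λ on ℝ, then for probability measures P₀, P₁ on ℝ with characteristic functions f̂₀, f̂₁, γ_K²(P₀,P₁) = ∫ |f̂₀(t) − f̂₁(t)|² dΛ(t). -/

import Mathlib

/-!
Since cos (t (x - y)) = Re (e^{itx} · conj e^{ity}) and all integrands are bounded on finite
measures, Fubini turns each double integral of K into ∫ Re (f̂_P(t) · conj f̂_Q(t)) dΛ(t).
The theorem is then the identity ‖a - b‖² = Re (a ā) + Re (b b̄) - 2 Re (a b̄) integrated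
against Λ.
-/

open MeasureTheory

/-- The characteristic function of a measure on ℝ. -/
noncomputable def charFunction (P : Measure ℝ) (t : ℝ) : ℂ :=
  ∫ x, Complex.exp (t * x * Complex.I) ∂P

open Complex ComplexConjugate

lemma charFunction_eq_charFun (P : Measure ℝ) : charFunction P = charFun P :=
  funext fun t => (charFun_apply_real t).symm

lemma cos_mul_sub_eq_re_exp_mul_conj (t x y : ℝ) :
    Real.cos (t * (x - y)) = (exp (t * x * I) * conj (exp (t * y * I))).re := by
  rw [← exp_conj, ← exp_add]
  convert (exp_ofReal_mul_I_re (t * (x - y))).symm using 3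
  simp only [map_mul, conj_ofReal, conj_I]
  push_cast
  ring

lemma norm_sub_sq_eq_re_mul_conj (a b : ℂ) :
    ‖a - b‖ ^ 2 = (a * conj a).re + (b * conj b).re - 2 * (a * conj b).re := by
  simp only [Complex.sq_norm, normSq_apply, mul_re, conj_re, conj_im, sub_re, sub_im]
  ring

lemma integral_prod_cos_mul_sub (P Q : Measure ℝ) [IsFiniteMeasure P] [IsFiniteMeasure Q]
    (t : ℝ) :
    ∫ z, Real.cos (t * (z.1 - z.2)) ∂(P.prod Q) = (charFun P t * conj (charFun Q t)).re := by
  have h : Integrable (fun z : ℝ × ℝ => exp (t * z.1 * I) * conj (exp (t * z.2 * I)))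
      (P.prod Q) :=
    .of_bound (by fun_prop) 1 (ae_of_all _ fun z => by
      simp [← exp_conj, norm_exp])
  calc ∫ z, Real.cos (t * (z.1 - z.2)) ∂(P.prod Q)
      = ∫ z, (exp (t * z.1 * I) * conj (exp (t * z.2 * I))).re ∂(P.prod Q) := by
        simp_rw [cos_mul_sub_eq_re_exp_mul_conj]
    _ = (∫ z, exp (t * z.1 * I) * conj (exp (t * z.2 * I)) ∂(P.prod Q)).re := integral_re h
    _ = (charFun P t * conj (charFun Q t)).re := by
        rw [integral_prod_mul (fun x : ℝ => exp (t * x * I)) fun y : ℝ => conj (exp (t * y * I)),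
          integral_conj, charFun_apply_real, charFun_apply_real]

lemma integral_integral_integral_cos_mul_sub (Λ P Q : Measure ℝ) [IsFiniteMeasure Λ]
    [IsFiniteMeasure P] [IsFiniteMeasure Q] :
    ∫ x, ∫ y, ∫ t, Real.cos (t * (x - y)) ∂Λ ∂Q ∂P
      = ∫ t, (charFun P t * conj (charFun Q t)).re ∂Λ := by
  have h : Integrable (fun p : (ℝ × ℝ) × ℝ => Real.cos (p.2 * (p.1.1 - p.1.2)))
      ((P.prod Q).prod Λ) :=
    .of_bound (by fun_prop) 1 (ae_of_all _ fun _ => by simpa using Real.abs_cos_le_one _)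
  calc ∫ x, ∫ y, ∫ t, Real.cos (t * (x - y)) ∂Λ ∂Q ∂P
      = ∫ z, ∫ t, Real.cos (t * (z.1 - z.2)) ∂Λ ∂(P.prod Q) :=
        (integral_prod _ h.integral_prod_left).symm
    _ = ∫ t, ∫ z, Real.cos (t * (z.1 - z.2)) ∂(P.prod Q) ∂Λ := integral_integral_swap h
    _ = ∫ t, (charFun P t * conj (charFun Q t)).re ∂Λ := by
        simp_rw [integral_prod_cos_mul_sub]

lemma integrable_re_charFun_mul_conj (Λ P Q : Measure ℝ) [IsFiniteMeasure Λ]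
    [IsFiniteMeasure P] [IsFiniteMeasure Q] :
    Integrable (fun t => (charFun P t * conj (charFun Q t)).re) Λ :=
  .of_bound (by fun_prop) (P.real Set.univ * Q.real Set.univ) (ae_of_all _ fun t =>
    calc ‖(charFun P t * conj (charFun Q t)).re‖ ≤ ‖charFun P t * conj (charFun Q t)‖ :=
          abs_re_le_norm _
      _ ≤ P.real Set.univ * Q.real Set.univ := by
          rw [norm_mul, RCLike.norm_conj]
          exact mul_le_mul (norm_charFun_le t) (norm_charFun_le t) (norm_nonneg _)
            measureReal_nonneg)

/-- MMD for translation-invariant kernels via characteristic functions: if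
K(x,y) = ∫ cos(t(x−y)) dΛ(t) for a finite nonnegative Borel measure Λ on ℝ (Bochner
representation), then γ_K²(P₀,P₁) = ∫ |f̂₀(t) − f̂₁(t)|² dΛ(t). -/
theorem mmd_translation_invariant_eq_charFunction_integral
    (Λ : Measure ℝ) [IsFiniteMeasure Λ]
    (K : ℝ → ℝ → ℝ) (hK : ∀ x y, K x y = ∫ t, Real.cos (t * (x - y)) ∂Λ)
    (P₀ P₁ : Measure ℝ) [IsProbabilityMeasure P₀] [IsProbabilityMeasure P₁] :
    (∫ x, ∫ x', K x x' ∂P₀ ∂P₀) + (∫ y, ∫ y', K y y' ∂P₁ ∂P₁)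
      - 2 * (∫ x, ∫ y, K x y ∂P₁ ∂P₀)
      = ∫ t, ‖charFunction P₀ t - charFunction P₁ t‖ ^ 2 ∂Λ := by
  simp_rw [hK, charFunction_eq_charFun, norm_sub_sq_eq_re_mul_conj]
  have h₀₀ := integrable_re_charFun_mul_conj Λ P₀ P₀
  have h₁₁ := integrable_re_charFun_mul_conj Λ P₁ P₁
  have h₀₁ := integrable_re_charFun_mul_conj Λ P₀ P₁
  rw [integral_sub _ (h₀₁.const_mul 2), integral_add h₀₀ h₁₁, integral_const_mul,
    integral_integral_integral_cos_mul_sub, integral_integral_integral_cos_mul_sub,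
    integral_integral_integral_cos_mul_sub]
  exact h₀₀.add h₁₁
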